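/- arXiv:2107.01157 — 3 statements merged into one kernel-verified Lean document; each statement's English description precedes it below -/
import Mathlib

section
/- Let G be a finite group of even order and T = {g ∈ G : g² = 1}. Then the power graph of G has a maximum matching whose set of unmatched vertices is contained in T. -/
open SimpleGraph

def powerGraph (G : Type*) [Group G] : SimpleGraph G where
  Adj x y := x ≠ y ∧ ((∃ n : ℕ, y ^ n = x) ∨ (∃ n : ℕ, x ^ n = y))
  symm := ⟨fun x y ⟨h, hp⟩ => ⟨h.symm, hp.symm⟩⟩
  loopless := ⟨fun x ⟨h, _⟩ => h rfl⟩

noncomputable def matchingNumber {V : Type*} (Γ : SimpleGraph V) : ℕ :=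
  sSup {n | ∃ M : Γ.Subgraph, M.IsMatching ∧ M.edgeSet.ncard = n}

def hasPerfectMatching {V : Type*} (Γ : SimpleGraph V) : Prop :=
  ∃ M : Γ.Subgraph, M.IsPerfectMatching

/-
Among the maximum matchings choose one containing as many edges `{x, x⁻¹}` as possible. If it
left some `u` with `u² ≠ 1` unmatched, then `u⁻¹ ≠ u` is adjacent to `u`, so by maximality `u⁻¹`
is matched to some `y ≠ u`. Replacing the edge `{u⁻¹, y}` by `{u, u⁻¹}` gives a matching of the
same size with one more edge of the form `{x, x⁻¹}`, a contradiction.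
-/

namespace SimpleGraph.Subgraph.IsMatching

variable {V : Type*} {Γ : SimpleGraph V} {M : Γ.Subgraph} {u v y : V}

lemma sup_subgraphOfAdj (hM : M.IsMatching) (hu : u ∉ M.verts) (hv : v ∉ M.verts)
    (huv : Γ.Adj u v) : (M ⊔ Γ.subgraphOfAdj huv).IsMatching := by
  refine hM.sup (.subgraphOfAdj huv) ?_
  rw [hM.support_eq_verts, (IsMatching.subgraphOfAdj huv).support_eq_verts,
    subgraphOfAdj_verts, Set.disjoint_insert_right, Set.disjoint_singleton_right]
  exact ⟨hu, hv⟩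

lemma deleteVerts_pair (hM : M.IsMatching) (hvy : M.Adj v y) :
    (M.deleteVerts {v, y}).IsMatching := by
  rintro a ⟨ha, hav⟩
  obtain ⟨p, hap, hp⟩ := hM ha
  have hpv : p ≠ v := fun h => hav (.inr (hM.eq_of_adj_right (h ▸ hap) hvy.symm))
  have hpy : p ≠ y := fun h => hav (.inl (hM.eq_of_adj_right (h ▸ hap) hvy))
  refine ⟨p, deleteVerts_adj.mpr ⟨ha, hav, M.edge_vert hap.symm, ?_, hap⟩,
    fun w hw => hp w (deleteVerts_adj.mp hw).2.2.2.2⟩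
  simp [hpv, hpy]

lemma edgeSet_deleteVerts_pair (hM : M.IsMatching) (hvy : M.Adj v y) :
    (M.deleteVerts {v, y}).edgeSet = M.edgeSet \ {s(v, y)} := by
  refine Set.ext (Sym2.ind fun a b => ?_)
  simp only [Subgraph.mem_edgeSet, deleteVerts_adj, Set.mem_sdiff, Set.mem_singleton_iff,
    Set.mem_insert_iff, Sym2.eq_iff, not_or, not_and]
  constructor
  · rintro ⟨-, ⟨hav, hay⟩, -, -, hab⟩
    exact ⟨hab, fun h => absurd h hav, fun h => absurd h hay⟩
  · rintro ⟨hab, hvy', hyv'⟩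
    have hav : a ≠ v := fun h => hvy' h (hM.eq_of_adj_left (h ▸ hab) hvy)
    have hay : a ≠ y := fun h => hyv' h (hM.eq_of_adj_left (h ▸ hab) hvy.symm)
    have hbv : b ≠ v := fun h => hyv' (hM.eq_of_adj_left (h ▸ hab.symm) hvy) h
    have hby : b ≠ y := fun h => hvy' (hM.eq_of_adj_left (h ▸ hab.symm) hvy.symm) h
    exact ⟨M.edge_vert hab, ⟨hav, hay⟩, M.edge_vert hab.symm, ⟨hbv, hby⟩, hab⟩

lemma exists_exchange (hM : M.IsMatching) (hu : u ∉ M.verts) (huv : Γ.Adj u v)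
    (hvy : M.Adj v y) :
    ∃ M' : Γ.Subgraph, M'.IsMatching ∧
      M'.edgeSet = insert s(u, v) (M.edgeSet \ {s(v, y)}) := by
  refine ⟨_, (hM.deleteVerts_pair hvy).sup_subgraphOfAdj (fun h => hu h.1)
    (fun h => h.2 (.inl rfl)) huv, ?_⟩
  rw [edgeSet_sup, hM.edgeSet_deleteVerts_pair hvy, edgeSet_subgraphOfAdj, Set.union_comm,
    Set.singleton_union]

end SimpleGraph.Subgraph.IsMatching

section MatchingNumber

variable {V : Type*} [Finite V] {Γ : SimpleGraph V}

lemma bddAbove_ncard_edgeSet_isMatching (Γ : SimpleGraph V) :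
    BddAbove {n | ∃ M : Γ.Subgraph, M.IsMatching ∧ M.edgeSet.ncard = n} :=
  ⟨Nat.card (Sym2 V), by rintro _ ⟨M, -, rfl⟩; exact Set.ncard_le_card _⟩

lemma SimpleGraph.Subgraph.IsMatching.ncard_edgeSet_le_matchingNumber {M : Γ.Subgraph}
    (hM : M.IsMatching) : M.edgeSet.ncard ≤ matchingNumber Γ :=
  le_csSup (bddAbove_ncard_edgeSet_isMatching Γ) ⟨M, hM, rfl⟩

lemma exists_isMatching_ncard_edgeSet_eq_matchingNumber (Γ : SimpleGraph V) :
    ∃ M : Γ.Subgraph, M.IsMatching ∧ M.edgeSet.ncard = matchingNumber Γ := by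
  refine Nat.sSup_mem ?_ (bddAbove_ncard_edgeSet_isMatching Γ)
  exact ⟨0, ⊥, fun _ h => h.elim, by simp⟩

lemma exists_isMatching_eq_matchingNumber_maximizing_ncard_inter
    (Γ : SimpleGraph V) (P : Set (Sym2 V)) :
    ∃ M : Γ.Subgraph, M.IsMatching ∧ M.edgeSet.ncard = matchingNumber Γ ∧
      ∀ M' : Γ.Subgraph, M'.IsMatching → M'.edgeSet.ncard = matchingNumber Γ →
        (M'.edgeSet ∩ P).ncard ≤ (M.edgeSet ∩ P).ncard := by
  obtain ⟨M, ⟨hM, hcard⟩, hopt⟩ :=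
    Set.exists_max_image {M : Γ.Subgraph | M.IsMatching ∧ M.edgeSet.ncard = matchingNumber Γ}
      (fun M => (M.edgeSet ∩ P).ncard) (Set.toFinite _)
      (exists_isMatching_ncard_edgeSet_eq_matchingNumber Γ)
  exact ⟨M, hM, hcard, fun M' hM' hcard' => hopt M' ⟨hM', hcard'⟩⟩

lemma SimpleGraph.Subgraph.IsMatching.exists_adj_mem_of_forall_ncard_inter_le
    {P : Set (Sym2 V)} {M : Γ.Subgraph} {u v : V} (hM : M.IsMatching)
    (hmax : M.edgeSet.ncard = matchingNumber Γ)
    (hopt : ∀ M' : Γ.Subgraph, M'.IsMatching → M'.edgeSet.ncard = matchingNumber Γ →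
      (M'.edgeSet ∩ P).ncard ≤ (M.edgeSet ∩ P).ncard)
    (hu : u ∉ M.verts) (huv : Γ.Adj u v) (hP : s(u, v) ∈ P) :
    ∃ y, M.Adj v y ∧ s(v, y) ∈ P := by
  have hnew : s(u, v) ∉ M.edgeSet := fun h => hu (M.edge_vert h)
  by_cases hv : v ∈ M.verts
  · obtain ⟨y, hvy, -⟩ := hM hv
    refine ⟨y, hvy, ?_⟩
    by_contra hy
    obtain ⟨M', hM', hE⟩ := hM.exists_exchange hu huv hvy
    have hcard : M'.edgeSet.ncard = matchingNumber Γ := by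
      rw [hE, Set.ncard_exchange hnew hvy, hmax]
    have hinter : M'.edgeSet ∩ P = insert s(u, v) (M.edgeSet ∩ P) := by
      rw [hE, Set.insert_inter_of_mem hP, Set.sdiff_inter_right_comm,
        Set.sdiff_singleton_eq_self (fun h => hy h.2)]
    have := hopt M' hM' hcard
    rw [hinter, Set.ncard_insert_of_notMem (fun h => hnew h.1)] at this
    omega
  · have hbig := (hM.sup_subgraphOfAdj hu hv huv).ncard_edgeSet_le_matchingNumber
    rw [edgeSet_sup, edgeSet_subgraphOfAdj, Set.union_singleton,
      Set.ncard_insert_of_notMem hnew] at hbig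
    omega

end MatchingNumber

lemma powerGraph_adj_inv {G : Type*} [Group G] {x : G} (hx : IsOfFinOrder x)
    (hx2 : x ^ 2 ≠ 1) : (powerGraph G).Adj x x⁻¹ := by
  refine ⟨fun h => hx2 (by rw [pow_two, ← eq_inv_iff_mul_eq_one, ← h]), .inr ?_⟩
  exact Submonoid.mem_powers_iff _ _ |>.mp <|
    hx.mem_powers_iff_mem_zpowers.mpr (inv_mem (Subgroup.mem_zpowers x))

theorem stmt1_general (G : Type*) [Group G] [Fintype G] :
    ∃ M : (powerGraph G).Subgraph, M.IsMatching ∧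
      M.edgeSet.ncard = matchingNumber (powerGraph G) ∧
      M.vertsᶜ ⊆ {g : G | g ^ 2 = 1} := by
  obtain ⟨M, hM, hmax, hopt⟩ :=
    exists_isMatching_eq_matchingNumber_maximizing_ncard_inter (powerGraph G)
      (Set.range fun x : G => s(x, x⁻¹))
  refine ⟨M, hM, hmax, fun u hu => ?_⟩
  by_contra hu2
  obtain ⟨y, hy, x, hx⟩ := hM.exists_adj_mem_of_forall_ncard_inter_le hmax hopt hu
    (powerGraph_adj_inv (isOfFinOrder_of_finite u) hu2) ⟨u, rfl⟩
  have hyu : y = u := by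
    rcases Sym2.eq_iff.mp hx with ⟨rfl, rfl⟩ | ⟨rfl, h⟩
    · exact inv_inv u
    · exact inv_injective h
  exact hu (hyu ▸ M.edge_vert hy.symm)

theorem stmt1 (G : Type*) [Group G] [Fintype G] (h : Even (Fintype.card G)) :
    ∃ M : (powerGraph G).Subgraph, M.IsMatching ∧
      M.edgeSet.ncard = matchingNumber (powerGraph G) ∧
      M.vertsᶜ ⊆ {g : G | g ^ 2 = 1} :=
  stmt1_general G
end

section
/- Let G be a finite group of even order and let t be an involution of G. Then the set C_t = {x ∈ G : t ∈ ⟨x⟩} is a connected component of the subgraph of the power graph of G induced on the set of elements of even order, and |C_t| is odd. -/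
open SimpleGraph

/-! A cyclic group contains at most one involution, so every element `x` of even order determines
the involution `x ^ (orderOf x / 2)`, and `t ∈ ⟨x⟩` says exactly that this involution is `t`.
Power-graph neighbours of even order share their involution, because one generates a subgroup
of the other; conversely `t` is a power of each `x` with `t ∈ ⟨x⟩`. Hence these `x` form the
component of `t`. Inversion is an involution of `{x | t ∈ ⟨x⟩}` whose only fixed point is `t`,
so this set has odd size. -/

section

open Subgroup

variable {G : Type*} [Group G] [Finite G]

lemma eq_of_orderOf_eq_two_of_mem_zpowers {x s t : G} (hs : orderOf s = 2)
    (ht : orderOf t = 2) (hsx : s ∈ zpowers x) (htx : t ∈ zpowers x) : s = t := by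
  classical
  have : Fintype (zpowers x) := Fintype.ofFinite _
  by_contra hst
  have hs1 : s ≠ 1 := by rintro rfl; simp at hs
  have ht1 : t ≠ 1 := by rintro rfl; simp at ht
  have hsub : ({1, ⟨s, hsx⟩, ⟨t, htx⟩} : Finset (zpowers x)) ⊆
      ({a | a ^ 2 = 1} : Finset (zpowers x)) := by
    intro a ha
    simp only [Finset.mem_insert, Finset.mem_singleton] at ha
    rcases ha with rfl | rfl | rfl
    · simp
    · simp [Subtype.ext_iff, ← hs, pow_orderOf_eq_one]
    · simp [Subtype.ext_iff, ← ht, pow_orderOf_eq_one]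
  have hcard := (Finset.card_le_card hsub).trans (IsCyclic.card_pow_eq_one_le two_pos)
  rw [Finset.card_insert_of_notMem (by simp [Subtype.ext_iff, hs1.symm, ht1.symm]),
    Finset.card_pair (by simpa [Subtype.ext_iff] using hst)] at hcard
  omega

lemma eq_of_inv_eq_self_of_mem_zpowers {t x : G} (ht : orderOf t = 2) (htx : t ∈ zpowers x)
    (hx : x⁻¹ = x) : x = t := by
  have hx1 : x ≠ 1 := by rintro rfl; simp_all
  have hx2 : orderOf x = 2 :=
    orderOf_eq_prime (by rw [pow_two, ← inv_eq_iff_mul_eq_one.mp hx]) hx1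
  exact eq_of_orderOf_eq_two_of_mem_zpowers hx2 ht (mem_zpowers x) htx

lemma mem_zpowers_of_powerGraph_adj {t x y : G} (ht : orderOf t = 2) (hy : Even (orderOf y))
    (hadj : (powerGraph G).Adj x y) (hx : t ∈ zpowers x) : t ∈ zpowers y := by
  obtain ⟨-, ⟨n, rfl⟩ | ⟨n, rfl⟩⟩ := hadj
  · exact zpowers_le.2 (pow_mem (mem_zpowers y) n) hx
  · have hs := orderOf_pow_orderOf_div (orderOf_pos (x ^ n)).ne' (even_iff_two_dvd.1 hy)
    have hsy := pow_mem (mem_zpowers (x ^ n)) (orderOf (x ^ n) / 2)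
    rwa [← eq_of_orderOf_eq_two_of_mem_zpowers hs ht
      (zpowers_le.2 (pow_mem (mem_zpowers x) n) hsy) hx]

lemma reachable_iff_mem_zpowers {t : G} (ht : orderOf t = 2) {x y : {x : G // Even (orderOf x)}}
    (hy : (y : G) = t) :
    ((powerGraph G).induce {x | Even (orderOf x)}).Reachable x y ↔ t ∈ zpowers (x : G) := by
  constructor
  · intro h
    rw [reachable_iff_reflTransGen] at h
    induction h using Relation.ReflTransGen.head_induction_on with
    | refl => exact hy ▸ mem_zpowers t
    | @head a _ hadj _ ih => exact mem_zpowers_of_powerGraph_adj ht a.2 hadj.symm ih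
  · intro hx
    by_cases hxy : x = y
    · rw [hxy]
    · exact Adj.reachable ⟨fun h => hxy (Subtype.ext h),
        Or.inr (show ∃ n : ℕ, (x : G) ^ n = y from hy ▸ mem_powers_iff_mem_zpowers.2 hx)⟩

lemma odd_ncard_setOf_mem_zpowers {t : G} (ht : orderOf t = 2) :
    Odd {x : G | t ∈ zpowers x}.ncard := by
  classical
  set C := {x : G | t ∈ zpowers x}
  have : Fintype C := Fintype.ofFinite _
  let inv : Function.End C := fun x => ⟨x⁻¹, by rw [Set.mem_ofPred_eq, zpowers_inv]; exact x.2⟩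
  have hinv : inv ^ 2 ^ 1 = 1 := by
    funext x
    rw [pow_one, pow_two]
    exact Subtype.ext (inv_inv x.1)
  have hfix : Fintype.card (Function.fixedPoints inv) = 1 := by
    have htt : t⁻¹ = t := inv_eq_of_mul_eq_one_left (by rw [← pow_two, ← ht, pow_orderOf_eq_one])
    refine Fintype.card_eq_one_iff.2 ⟨⟨⟨t, mem_zpowers t⟩, Subtype.ext htt⟩, fun x => ?_⟩
    exact Subtype.ext <| Subtype.ext <|
      eq_of_inv_eq_self_of_mem_zpowers ht x.1.2 (congrArg Subtype.val x.2)
  have hmod := Equiv.Perm.card_fixedPoints_modEq hinv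
  rw [Set.ncard_eq_toFinset_card', Set.toFinset_card, Nat.odd_iff, hmod, hfix]

end

theorem stmt6_general (G : Type*) [Group G] [Fintype G]
    (t : G) (ht : orderOf t = 2) :
    (∃ c : (SimpleGraph.induce {x : G | Even (orderOf x)} (powerGraph G)).ConnectedComponent,
      c.supp = {x : {x : G // Even (orderOf x)} | t ∈ Subgroup.zpowers (x : G)}) ∧
    Odd {x : G | t ∈ Subgroup.zpowers x}.ncard := by
  refine ⟨⟨connectedComponentMk _ ⟨t, show Even (orderOf t) from ht ▸ even_two⟩, ?_⟩,
    odd_ncard_setOf_mem_zpowers ht⟩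
  ext x
  exact ConnectedComponent.eq.trans (reachable_iff_mem_zpowers ht rfl)

theorem stmt6 (G : Type*) [Group G] [Fintype G] (h : Even (Fintype.card G))
    (t : G) (ht : orderOf t = 2) :
    (∃ c : (SimpleGraph.induce {x : G | Even (orderOf x)} (powerGraph G)).ConnectedComponent,
      c.supp = {x : {x : G // Even (orderOf x)} | t ∈ Subgroup.zpowers (x : G)}) ∧
    Odd {x : G | t ∈ Subgroup.zpowers x}.ncard :=
  stmt6_general G t ht
end

section
/- Let G be a finite group of even order, S the set of involutions, and m = |O(C_G(S))| the number of elements of odd order commuting with all involutions. Then the power graph of G has a matching leaving at most max{0, |S| - m} vertices unmatched. -/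
open SimpleGraph

/-!
Inversion matches every `g` with `g⁻¹ ≠ g` to the adjacent vertex `g⁻¹`, leaving exactly `1`
and the involutions unmatched; in particular an even `|G|` forces `|S|` to be odd.
If `t² = 1` and `c` has odd order and commutes with `t`, then `t` and `c` are powers of `t * c`,
and `t * c` determines `t` and `c` (as `c` is a power of `c² = (t * c)²`).
Let `C` be the set of odd-order elements centralizing `S`. Take an inverse-closed `K ⊆ C`
containing `1` with `|K| = min |S| |C|` (both are odd) and an injection `f : K → S`, and rematch
`y – f y * y` for `y ∈ K` and `f y – f y * y⁻¹` for `y ∈ K \ {1}`. The rematched vertices form an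
inverse-closed set apart from the involutions among them, so inversion still matches all remaining
`g` with `g⁻¹ ≠ g`, and only the `|S| - |K|` involutions outside `f K` stay unmatched.
-/

open Function

namespace SimpleGraph.Subgraph

variable {V : Type*} {Γ : SimpleGraph V}

theorem exists_isMatching_verts_eq_of_involutive (σ : V → V) (A : Set V)
    (hσA : Set.MapsTo σ A A) (hσσ : ∀ v ∈ A, σ (σ v) = v) (hadj : ∀ v ∈ A, Γ.Adj v (σ v)) :
    ∃ M : Γ.Subgraph, M.IsMatching ∧ M.verts = A := by
  refine ⟨{ verts := A
            Adj := fun v w => (v ∈ A ∧ w = σ v) ∨ (w ∈ A ∧ v = σ w)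
            adj_sub := ?_
            edge_vert := ?_
            symm := ⟨fun v w h => h.symm⟩ }, ?_, rfl⟩
  · rintro v w (⟨hv, rfl⟩ | ⟨hw, rfl⟩)
    · exact hadj v hv
    · exact (hadj w hw).symm
  · rintro v w (⟨hv, -⟩ | ⟨hw, rfl⟩)
    · exact hv
    · exact hσA hw
  · intro v hv
    refine ⟨σ v, Or.inl ⟨hv, rfl⟩, ?_⟩
    rintro w (⟨-, rfl⟩ | ⟨hw, rfl⟩)
    · rfl
    · exact (hσσ w hw).symm

theorem exists_isMatching_verts_eq_range_union {ι : Type*} (a b : ι → V) (ha : Injective a)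
    (hb : Injective b) (hab : ∀ i j, a i ≠ b j) (hadj : ∀ i, Γ.Adj (a i) (b i)) :
    ∃ M : Γ.Subgraph, M.IsMatching ∧ M.verts = Set.range a ∪ Set.range b := by
  obtain ⟨M, hMv, hM⟩ := IsMatching.exists_of_disjoint_sets_of_equiv
    (Set.disjoint_range_iff.mpr hab) ((Equiv.ofInjective a ha).symm.trans (Equiv.ofInjective b hb))
    (fun v => by simpa [Equiv.apply_ofInjective_symm] using hadj ((Equiv.ofInjective a ha).symm v))
  exact ⟨M, hM, hMv⟩

end SimpleGraph.Subgraph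

section Group

variable {G : Type*} [Group G]

theorem orderOf_eq_two_of_inv_eq_self {x : G} (h : x⁻¹ = x) (hx : x ≠ 1) : orderOf x = 2 :=
  haveI : Fact (Nat.Prime 2) := ⟨Nat.prime_two⟩
  orderOf_eq_prime (by rw [sq]; nth_rw 1 [← h]; exact inv_mul_cancel x) hx

theorem eq_one_of_inv_eq_self_of_odd_orderOf {x : G} (hx : Odd (orderOf x)) (h : x⁻¹ = x) :
    x = 1 := by
  by_contra hne
  rw [orderOf_eq_two_of_inv_eq_self h hne] at hx
  exact Nat.not_odd_iff_even.mpr even_two hx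

theorem Odd.pow_eq_self_of_sq_eq_one {n : ℕ} (hn : Odd n) {t : G} (ht : t ^ 2 = 1) :
    t ^ n = t := by
  obtain ⟨k, rfl⟩ := hn
  rw [pow_succ, pow_mul, ht, one_pow, one_mul]

theorem Even.pow_eq_one_of_sq_eq_one {n : ℕ} (hn : Even n) {t : G} (ht : t ^ 2 = 1) :
    t ^ n = 1 := by
  obtain ⟨k, rfl⟩ := hn
  rw [← two_mul, pow_mul, ht, one_pow]

theorem sq_pow_orderOf_sq_succ_div_two {c : G} (hc : Odd (orderOf c)) :
    (c ^ 2) ^ ((orderOf (c ^ 2) + 1) / 2) = c := by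
  rw [Nat.Coprime.orderOf_pow hc.coprime_two_right, ← pow_mul]
  obtain ⟨k, hk⟩ := hc
  rw [show 2 * ((orderOf c + 1) / 2) = orderOf c + 1 by omega, pow_succ, pow_orderOf_eq_one,
    one_mul]

theorem eq_of_sq_eq_sq_of_odd_orderOf {c c' : G} (hc : Odd (orderOf c)) (hc' : Odd (orderOf c'))
    (h : c ^ 2 = c' ^ 2) : c = c' := by
  rw [← sq_pow_orderOf_sq_succ_div_two hc, ← sq_pow_orderOf_sq_succ_div_two hc', h]

theorem injOn_mul_sq_eq_one_odd_orderOf :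
    {p : G × G | p.1 ^ 2 = 1 ∧ Odd (orderOf p.2) ∧ Commute p.1 p.2}.InjOn (fun p => p.1 * p.2) := by
  rintro ⟨t, c⟩ ⟨ht, hc, htc⟩ ⟨t', c'⟩ ⟨ht', hc', htc'⟩ (h : t * c = t' * c')
  have hcc' : c = c' := eq_of_sq_eq_sq_of_odd_orderOf hc hc' <| by
    rw [← one_mul (c ^ 2), ← ht, ← htc.mul_pow, h, htc'.mul_pow, ht', one_mul]
  subst hcc'
  rw [mul_right_cancel h]

theorem Finset.exists_inv_mem_subset_card_eq_min {C : Finset G} (hC1 : 1 ∈ C)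
    (hCinv : ∀ x ∈ C, x⁻¹ ∈ C) (hC : ∀ x ∈ C, x⁻¹ = x → x = 1) (n : ℕ) :
    ∃ K ⊆ C, 1 ∈ K ∧ (∀ x ∈ K, x⁻¹ ∈ K) ∧ Odd K.card ∧ K.card = min (2 * n + 1) C.card := by
  classical
  induction n with
  | zero =>
    refine ⟨{1}, by simpa using hC1, by simp, by simp, by simp, ?_⟩
    have := Finset.card_pos.mpr ⟨1, hC1⟩
    simp only [Finset.card_singleton]
    omega
  | succ n ih =>
    obtain ⟨K, hKC, hK1, hKinv, hKodd, hKcard⟩ := ih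
    by_cases hKeq : K = C
    · subst hKeq
      exact ⟨K, subset_rfl, hK1, hKinv, hKodd, by omega⟩
    obtain ⟨x, hxC, hxK⟩ := Finset.exists_of_ssubset (hKC.ssubset_of_ne hKeq)
    have hxinvK : x⁻¹ ∉ K := fun h => hxK (inv_inv x ▸ hKinv _ h)
    have hxinv : x⁻¹ ≠ x := fun h => hxK (hC x hxC h ▸ hK1)
    have hcard : (insert x (insert x⁻¹ K)).card = K.card + 2 := by
      rw [Finset.card_insert_of_notMem (by simp [hxK, hxinv.symm]),
        Finset.card_insert_of_notMem hxinvK]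
    have hKC' : insert x (insert x⁻¹ K) ⊆ C :=
      Finset.insert_subset hxC (Finset.insert_subset (hCinv x hxC) hKC)
    have hlt : K.card < C.card := Finset.card_lt_card (hKC.ssubset_of_ne hKeq)
    have hle := Finset.card_le_card hKC'
    refine ⟨_, hKC', by simp [hK1], ?_, hcard ▸ hKodd.add_even even_two, by omega⟩
    intro y hy
    simp only [Finset.mem_insert] at hy ⊢
    rcases hy with rfl | rfl | hy
    · simp
    · simp
    · simp [hKinv y hy]

theorem Finset.odd_card_of_inv_mem {C : Finset G} (hC1 : 1 ∈ C) (hCinv : ∀ x ∈ C, x⁻¹ ∈ C)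
    (hC : ∀ x ∈ C, x⁻¹ = x → x = 1) : Odd C.card := by
  obtain ⟨K, -, -, -, hKodd, hKcard⟩ := exists_inv_mem_subset_card_eq_min hC1 hCinv hC C.card
  rwa [hKcard, min_eq_right (by omega)] at hKodd

theorem odd_ncard_orderOf_eq_two [Finite G] (h : Even (Nat.card G)) :
    Odd {t : G | orderOf t = 2}.ncard := by
  classical
  have : Fintype G := Fintype.ofFinite G
  have hN : Odd {t : G | orderOf t = 2}ᶜ.ncard := by
    rw [Set.ncard_eq_toFinset_card']
    refine Finset.odd_card_of_inv_mem (by simp) (by simp) ?_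
    intro x hx h
    by_contra hne
    simp only [Set.mem_toFinset, Set.mem_compl_iff, Set.mem_ofPred_eq] at hx
    exact hx (orderOf_eq_two_of_inv_eq_self h hne)
  rw [← Set.ncard_add_ncard_compl {t : G | orderOf t = 2}] at h
  exact Nat.not_even_iff_odd.mp fun hS => Nat.not_even_iff_odd.mpr hN ((Nat.even_add.mp h).mp hS)

theorem powerGraph_adj_left_mul {t c : G} (ht : t ^ 2 = 1) (hc : Odd (orderOf c))
    (htc : Commute t c) (hc1 : c ≠ 1) : (powerGraph G).Adj t (t * c) :=
  ⟨(mul_ne_left.mpr hc1).symm, Or.inl ⟨orderOf c, by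
    rw [htc.mul_pow, pow_orderOf_eq_one, mul_one, hc.pow_eq_self_of_sq_eq_one ht]⟩⟩

theorem powerGraph_adj_right_mul {t c : G} (ht : t ^ 2 = 1) (hc : Odd (orderOf c))
    (htc : Commute t c) (ht1 : t ≠ 1) : (powerGraph G).Adj c (t * c) :=
  ⟨(mul_ne_right.mpr ht1).symm, Or.inl ⟨orderOf c + 1, by
    rw [htc.mul_pow, hc.add_one.pow_eq_one_of_sq_eq_one ht, pow_succ, pow_orderOf_eq_one,
      one_mul, one_mul]⟩⟩

theorem powerGraph_adj_inv_s8 {g : G} (hg : IsOfFinOrder g) (h : g⁻¹ ≠ g) :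
    (powerGraph G).Adj g g⁻¹ :=
  ⟨h.symm, Or.inr ⟨orderOf g - 1, eq_inv_of_mul_eq_one_left <| by
    rw [← pow_succ, Nat.sub_add_cancel hg.orderOf_pos, pow_orderOf_eq_one]⟩⟩

theorem exists_isMatching_powerGraph_superset [Finite G] (M₀ : (powerGraph G).Subgraph)
    (hM₀ : M₀.IsMatching) (hinv : ∀ x ∈ M₀.verts, x⁻¹ ≠ x → x⁻¹ ∈ M₀.verts) :
    ∃ M : (powerGraph G).Subgraph, M.IsMatching ∧ M₀.verts ∪ {g | g⁻¹ ≠ g} ⊆ M.verts := by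
  have hA : ∀ g, g⁻¹ ≠ g → g ∉ M₀.verts → g⁻¹ ∉ M₀.verts := fun g hg hgM hg' =>
    hgM (inv_inv g ▸ hinv _ hg' (by rwa [inv_inv, ne_comm]))
  obtain ⟨M₁, hM₁, hM₁v⟩ := SimpleGraph.Subgraph.exists_isMatching_verts_eq_of_involutive
    (fun g => g⁻¹) {g | g⁻¹ ≠ g ∧ g ∉ M₀.verts}
    (fun g hg => ⟨by rw [inv_inv, ne_comm]; exact hg.1, hA g hg.1 hg.2⟩)
    (fun g _ => inv_inv g) (fun g hg => powerGraph_adj_inv_s8 (isOfFinOrder_of_finite g) hg.1)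
  refine ⟨M₀ ⊔ M₁, hM₀.sup hM₁ ?_, ?_⟩
  · rw [hM₀.support_eq_verts, hM₁.support_eq_verts, hM₁v]
    exact Set.disjoint_left.mpr fun g hg hA => hA.2 hg
  · rw [SimpleGraph.Subgraph.verts_sup, hM₁v]
    rintro g (hg | hg)
    · exact Or.inl hg
    · by_cases hgM : g ∈ M₀.verts
      · exact Or.inl hgM
      · exact Or.inr ⟨hg, hgM⟩

section Rematch

variable {K : Set G}

/-- Endpoints of the rematched edges `y – f y * y` and `f y – f y * y⁻¹`. A vertex `t * c` is
recorded as the pair `(t, c)`, so that distinctness is checked coordinatewise and transported by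
`injOn_mul_sq_eq_one_odd_orderOf`. -/
def rematchLeft (f : K → G) : K ⊕ {y : K // (y : G) ≠ 1} → G × G :=
  Sum.elim (fun y => (1, y)) (fun y => (f y, 1))

def rematchRight (f : K → G) : K ⊕ {y : K // (y : G) ≠ 1} → G × G :=
  Sum.elim (fun y => (f y, y)) (fun y => (f y, (y : G)⁻¹))

variable {f : K → G}

theorem rematchLeft_injective (hf : Injective f) (hf1 : ∀ y, f y ≠ 1) :
    Injective (rematchLeft f) := by
  rintro (y | y) (y' | y') h <;>
    simp only [rematchLeft, Sum.elim_inl, Sum.elim_inr, Prod.mk.injEq] at h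
  · exact congrArg _ (Subtype.ext h.2)
  · exact absurd h.1.symm (hf1 _)
  · exact absurd h.1 (hf1 _)
  · exact congrArg _ (Subtype.ext (hf h.1))

theorem rematchRight_injective (hKodd : ∀ y ∈ K, Odd (orderOf y)) (hf : Injective f) :
    Injective (rematchRight f) := by
  have hinv_ne (y : K) (hy : (y : G) ≠ 1) : (y : G) ≠ (y : G)⁻¹ := fun h =>
    hy (eq_one_of_inv_eq_self_of_odd_orderOf (hKodd y y.2) h.symm)
  rintro (y | y) (y' | y') h <;>
    simp only [rematchRight, Sum.elim_inl, Sum.elim_inr, Prod.mk.injEq] at h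
  · exact congrArg _ (Subtype.ext h.2)
  · obtain rfl := hf h.1
    exact absurd h.2 (hinv_ne _ y'.2)
  · obtain rfl := hf h.1
    exact absurd h.2.symm (hinv_ne _ y.2)
  · exact congrArg _ (Subtype.ext (hf h.1))

theorem rematchLeft_ne_rematchRight (hf : Injective f) (hf1 : ∀ y, f y ≠ 1) (i j) :
    rematchLeft f i ≠ rematchRight f j := by
  rintro h
  rcases i with y | y <;> rcases j with y' | y' <;>
    simp only [rematchLeft, rematchRight, Sum.elim_inl, Sum.elim_inr, Prod.mk.injEq] at h
  · exact hf1 _ h.1.symm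
  · exact hf1 _ h.1.symm
  · obtain rfl := hf h.1
    exact y.2 h.2.symm
  · exact y'.2 (inv_eq_one.mp h.2.symm)

theorem rematchLeft_mem (hKodd : ∀ y ∈ K, Odd (orderOf y)) (hfS : ∀ y, orderOf (f y) = 2) (i) :
    rematchLeft f i ∈ {p : G × G | p.1 ^ 2 = 1 ∧ Odd (orderOf p.2) ∧ Commute p.1 p.2} := by
  rcases i with y | y
  · exact ⟨one_pow 2, hKodd y y.2, Commute.one_left _⟩
  · exact ⟨hfS y ▸ pow_orderOf_eq_one _, by simp [rematchLeft], Commute.one_right _⟩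

theorem rematchRight_mem (hKodd : ∀ y ∈ K, Odd (orderOf y))
    (hKcomm : ∀ y ∈ K, ∀ t : G, orderOf t = 2 → Commute t y) (hfS : ∀ y, orderOf (f y) = 2) (i) :
    rematchRight f i ∈ {p : G × G | p.1 ^ 2 = 1 ∧ Odd (orderOf p.2) ∧ Commute p.1 p.2} := by
  rcases i with y | y
  · exact ⟨hfS y ▸ pow_orderOf_eq_one _, hKodd y y.2, hKcomm y y.2 _ (hfS y)⟩
  · exact ⟨hfS y ▸ pow_orderOf_eq_one _, by simpa [rematchRight] using hKodd y y.1.2,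
      (hKcomm y y.1.2 _ (hfS y)).inv_right⟩

theorem exists_isMatching_powerGraph_rematch (hK1 : 1 ∈ K) (hKinv : ∀ y ∈ K, y⁻¹ ∈ K)
    (hKodd : ∀ y ∈ K, Odd (orderOf y)) (hKcomm : ∀ y ∈ K, ∀ t : G, orderOf t = 2 → Commute t y)
    (hf : Injective f) (hfS : ∀ y, orderOf (f y) = 2) :
    ∃ M : (powerGraph G).Subgraph, M.IsMatching ∧ 1 ∈ M.verts ∧ Set.range f ⊆ M.verts ∧
      ∀ x ∈ M.verts, x⁻¹ ≠ x → x⁻¹ ∈ M.verts := by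
  have hf2 (y : K) : f y ^ 2 = 1 := hfS y ▸ pow_orderOf_eq_one (f y)
  have hf1 (y : K) : f y ≠ 1 := fun h => by simpa [h] using hfS y
  have hfc (y : K) : Commute (f y) y := hKcomm y y.2 _ (hfS y)
  have hinv_mul (y : K) {c : G} (h : Commute (f y) c) : (f y * c)⁻¹ = f y * c⁻¹ := by
    rw [mul_inv_rev, inv_eq_of_mul_eq_one_right (a := f y) (by rw [← sq, hf2])]
    exact h.inv_right.eq.symm
  let D := {p : G × G | p.1 ^ 2 = 1 ∧ Odd (orderOf p.2) ∧ Commute p.1 p.2}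
  have hμ : D.InjOn fun p => p.1 * p.2 := injOn_mul_sq_eq_one_odd_orderOf
  have haD := rematchLeft_mem hKodd hfS
  have hbD := rematchRight_mem hKodd hKcomm hfS
  have hadj : ∀ i, (powerGraph G).Adj ((rematchLeft f i).1 * (rematchLeft f i).2)
      ((rematchRight f i).1 * (rematchRight f i).2) := by
    rintro (y | y)
    · simpa [rematchLeft, rematchRight] using
        powerGraph_adj_right_mul (hf2 y) (hKodd y y.2) (hfc y) (hf1 y)
    · simpa [rematchLeft, rematchRight] using
        powerGraph_adj_left_mul (hf2 y) (by simpa using hKodd y y.1.2) (hfc y).inv_right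
          (inv_ne_one.mpr y.2)
  obtain ⟨M, hM, hMv⟩ := SimpleGraph.Subgraph.exists_isMatching_verts_eq_range_union _ _
    (fun i j h => rematchLeft_injective hf hf1 (hμ (haD i) (haD j) h))
    (fun i j h => rematchRight_injective hKodd hf (hμ (hbD i) (hbD j) h))
    (fun i j h => rematchLeft_ne_rematchRight hf hf1 i j (hμ (haD i) (hbD j) h)) hadj
  refine ⟨M, hM, hMv ▸ Or.inl ⟨.inl ⟨1, hK1⟩, one_mul 1⟩, ?_, ?_⟩
  · rintro _ ⟨y, rfl⟩
    rw [hMv]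
    by_cases hy : (y : G) = 1
    · exact Or.inr ⟨.inl y, by simp [rematchRight, hy]⟩
    · exact Or.inl ⟨.inr ⟨y, hy⟩, mul_one _⟩
  · rw [hMv]
    rintro x (⟨y | y, rfl⟩ | ⟨y | y, rfl⟩) hx
    · exact Or.inl ⟨.inl ⟨_, hKinv y y.2⟩, by simp [rematchLeft]⟩
    · exact absurd (by simpa [rematchLeft] using hinv_mul y (Commute.one_right _)) hx
    · by_cases hy : (y : G) = 1
      · exact absurd (by simpa [rematchRight, hy] using hinv_mul y (Commute.one_right _)) hx
      · exact Or.inr ⟨.inr ⟨y, hy⟩, (hinv_mul y (hfc y)).symm⟩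
    · exact Or.inr ⟨.inl y, by simpa [rematchRight] using (hinv_mul y (hfc y).inv_right).symm⟩

end Rematch

theorem exists_isMatching_powerGraph_compl_verts_subset [Finite G] {K : Set G} {f : K → G}
    (hK1 : 1 ∈ K) (hKinv : ∀ y ∈ K, y⁻¹ ∈ K) (hKodd : ∀ y ∈ K, Odd (orderOf y))
    (hKcomm : ∀ y ∈ K, ∀ t : G, orderOf t = 2 → Commute t y) (hf : Injective f)
    (hfS : ∀ y, orderOf (f y) = 2) :
    ∃ M : (powerGraph G).Subgraph, M.IsMatching ∧
      M.vertsᶜ ⊆ {t | orderOf t = 2} \ Set.range f := by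
  obtain ⟨M₀, hM₀, h1, hf', hinv⟩ :=
    exists_isMatching_powerGraph_rematch hK1 hKinv hKodd hKcomm hf hfS
  obtain ⟨M, hM, hsub⟩ := exists_isMatching_powerGraph_superset M₀ hM₀ hinv
  refine ⟨M, hM, fun g hg => ⟨?_, fun hgf => hg (hsub (Or.inl (hf' hgf)))⟩⟩
  have hg' : g⁻¹ = g := by_contra fun h => hg (hsub (Or.inr h))
  exact orderOf_eq_two_of_inv_eq_self hg' (by rintro rfl; exact hg (hsub (Or.inl h1)))

end Group

theorem stmt8 (G : Type*) [Group G] [Fintype G] (h : Even (Fintype.card G)) :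
    ∃ M : (powerGraph G).Subgraph, M.IsMatching ∧
      M.vertsᶜ.ncard ≤ max 0 ({t : G | orderOf t = 2}.ncard -
        {x : G | Odd (orderOf x) ∧ ∀ t : G, orderOf t = 2 → t * x = x * t}.ncard) := by
  classical
  set S := {t : G | orderOf t = 2}
  set C := {x : G | Odd (orderOf x) ∧ ∀ t : G, orderOf t = 2 → t * x = x * t}
  obtain ⟨k, hk⟩ : Odd S.ncard := odd_ncard_orderOf_eq_two (by rwa [Nat.card_eq_fintype_card])
  obtain ⟨K, hKC, hK1, hKinv, -, hKcard⟩ := Finset.exists_inv_mem_subset_card_eq_min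
    (C := C.toFinset) (by simp [C])
    (fun x hx => by
      obtain ⟨hxo, hxc⟩ := Set.mem_toFinset.mp hx
      exact Set.mem_toFinset.mpr ⟨by rwa [orderOf_inv], fun t ht => Commute.inv_right (hxc t ht)⟩)
    (fun x hx => eq_one_of_inv_eq_self_of_odd_orderOf (Set.mem_toFinset.mp hx).1) k
  rw [← Set.ncard_eq_toFinset_card'] at hKcard
  obtain ⟨e⟩ : Nonempty ((K : Set G) ↪ S) := Function.Embedding.nonempty_of_card_le <| by
    rw [← Nat.card_eq_fintype_card, ← Nat.card_eq_fintype_card, Nat.card_coe_set_eq,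
      Nat.card_coe_set_eq, Set.ncard_coe_finset]
    omega
  have he : Injective fun y => (e y : G) := Subtype.val_injective.comp e.injective
  obtain ⟨M, hM, hMc⟩ := exists_isMatching_powerGraph_compl_verts_subset (K := K) hK1
    hKinv (fun y hy => (Set.mem_toFinset.mp (hKC hy)).1)
    (fun y hy => (Set.mem_toFinset.mp (hKC hy)).2) he (fun y => (e y).2)
  refine ⟨M, hM, ?_⟩
  calc M.vertsᶜ.ncard ≤ (S \ Set.range fun y => (e y : G)).ncard := Set.ncard_le_ncard hMc
    _ = S.ncard - K.card := by
      rw [Set.ncard_sdiff (by rintro _ ⟨y, rfl⟩; exact (e y).2), Set.ncard_range_of_injective he,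
        Nat.card_coe_set_eq, Set.ncard_coe_finset]
    _ = max 0 (S.ncard - C.ncard) := by omega
end
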